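/- arXiv:2101.05657 — 2 statements merged into one kernel-verified Lean document; each statement's English description precedes it below -/
import Mathlib

section
/- In a noisy query game with n options, query set Q, observation space X of finite volume |X|, where each observation density f_{q,i} is bounded above by c with c·|X| > 1, any strategy that identifies the secret option i* with probability at least 2/3 must make at least log(n) / (3·log(c·|X|)) queries. -/
/-!
For every observation sequence `x`, only the guessed option `guess x` contributes to the success
sum, and its likelihood is a product of `T` densities, hence at most `c ^ T`. Integrating over
`X ^ T` gives `(2/3) n ≤ (c |X|) ^ T`, and `n ≤ (2n/3)³` for `n ≥ 2` turns this into
`log n ≤ 3 T log (c |X|)`.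
-/

open MeasureTheory Finset

/-- Non-integrable summands have integral `0`, so only the integrable ones are moved under the
integral sign: no measurability of the `g i` is needed. -/
theorem sum_integral_le_mul_measureReal_univ {ι α : Type*} [MeasurableSpace α] {μ : Measure α}
    [IsFiniteMeasure μ] (s : Finset ι) {g : ι → α → ℝ} {C : ℝ} (hg : ∀ i x, 0 ≤ g i x)
    (hC : ∀ x, ∑ i ∈ s, g i x ≤ C) :
    ∑ i ∈ s, ∫ x, g i x ∂μ ≤ C * μ.real Set.univ := by
  classical
  set S := s.filter fun i => Integrable (g i) μ
  have hS : ∑ i ∈ s, ∫ x, g i x ∂μ = ∑ i ∈ S, ∫ x, g i x ∂μ :=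
    (sum_subset (filter_subset _ s) fun i hi hiS =>
      integral_undef fun hint => hiS (mem_filter.2 ⟨hi, hint⟩)).symm
  rw [hS, ← integral_finsetSum S fun i hi => (mem_filter.1 hi).2]
  refine (Real.le_norm_self _).trans
    (norm_integral_le_of_norm_le_const (Filter.Eventually.of_forall fun x => ?_))
  rw [Real.norm_of_nonneg (sum_nonneg fun i _ => hg i x)]
  exact (sum_le_sum_of_subset_of_nonneg (filter_subset _ s) fun i _ _ => hg i x).trans (hC x)

theorem measureReal_pi_univ_const {ι α : Type*} [Fintype ι] [MeasurableSpace α] (μ : Measure α)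
    [SigmaFinite μ] :
    (Measure.pi fun _ : ι => μ).real Set.univ = μ.real Set.univ ^ Fintype.card ι := by
  simp [measureReal_def, Measure.pi_univ]

theorem sum_ite_eq_mul_prod_le_pow {ι κ : Type*} [Fintype ι] [Fintype κ] [DecidableEq κ]
    {a : κ → ι → ℝ} {c : ℝ} (ha0 : ∀ i t, 0 ≤ a i t) (hac : ∀ i t, a i t ≤ c) (j : κ) :
    ∑ i, (if j = i then (1 : ℝ) else 0) * ∏ t, a i t ≤ c ^ Fintype.card ι := by
  simp only [boole_mul, sum_ite_eq, mem_univ, if_true]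
  calc ∏ t, a j t ≤ ∏ _t : ι, c := prod_le_prod (fun t _ => ha0 j t) fun t _ => hac j t
    _ = c ^ Fintype.card ι := by rw [prod_const, card_univ]

theorem natCast_le_pow_three {n : ℕ} {y : ℝ} (hy : 1 ≤ y) (h : 2 / 3 * n ≤ y) :
    (n : ℝ) ≤ y ^ 3 := by
  rcases le_or_gt n 1 with hn | hn
  · exact (Nat.cast_le_one.2 hn).trans (one_le_pow₀ hy)
  · have hn2 : (2 : ℝ) ≤ n := by exact_mod_cast hn
    calc (n : ℝ) ≤ (2 / 3 * n) ^ 3 := by nlinarith [mul_le_mul hn2 hn2 zero_le_two (by linarith)]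
      _ ≤ y ^ 3 := pow_le_pow_left₀ (by positivity) h 3

theorem log_natCast_le_three_mul_log {n : ℕ} {y : ℝ} (hy : 1 ≤ y) (h : 2 / 3 ≤ y / n) :
    Real.log n ≤ 3 * Real.log y := by
  rcases Nat.eq_zero_or_pos n with rfl | hn
  · simpa using Real.log_nonneg hy
  · have hn' : (0 : ℝ) < n := by exact_mod_cast hn
    calc Real.log n ≤ Real.log (y ^ 3) :=
          Real.log_le_log hn' (natCast_le_pow_three hy (by rwa [le_div_iff₀ hn'] at h))
      _ = 3 * Real.log y := by rw [Real.log_pow]; norm_num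

open MeasureTheory in
theorem stmt_5_general {Q X : Type*} [MeasurableSpace X] (μ : Measure X) [IsFiniteMeasure μ]
    (n : ℕ) (c : ℝ)
    (f : Q → Fin n → X → ℝ)
    (hf0 : ∀ q i x, 0 ≤ f q i x)
    (hfc : ∀ q i x, f q i x ≤ c)
    (hcvol : 1 < c * (μ Set.univ).toReal)
    (T : ℕ)
    (query : Fin T → (Fin T → X) → Q)
    (guess : (Fin T → X) → Fin n)
    -- the success probability, written via the likelihood of the observation sequence
    (hsucc : 2/3 ≤ (1 / (n : ℝ)) * ∑ i : Fin n,
      ∫ x, (if guess x = i then (1:ℝ) else 0) * ∏ t : Fin T, f (query t x) i (x t)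
        ∂(Measure.pi fun _ : Fin T => μ)) :
    Real.log n / (3 * Real.log (c * (μ Set.univ).toReal)) ≤ (T : ℝ) := by
  have hsum : ∑ i : Fin n,
      ∫ x, (if guess x = i then (1:ℝ) else 0) * ∏ t : Fin T, f (query t x) i (x t)
        ∂(Measure.pi fun _ : Fin T => μ) ≤ (c * (μ Set.univ).toReal) ^ T := by
    calc _ ≤ c ^ T * (Measure.pi fun _ : Fin T => μ).real Set.univ :=
          sum_integral_le_mul_measureReal_univ _
            (fun i x => mul_nonneg (by positivity) (prod_nonneg fun t _ => hf0 _ _ _))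
            fun x => by
              simpa using sum_ite_eq_mul_prod_le_pow (a := fun i t => f (query t x) i (x t))
                (fun i t => hf0 _ _ _) (fun i t => hfc _ _ _) (guess x)
      _ = _ := by rw [measureReal_pi_univ_const, mul_pow, Fintype.card_fin, measureReal_def]
  have hratio : 2 / 3 ≤ (c * (μ Set.univ).toReal) ^ T / n :=
    hsucc.trans (by rw [one_div_mul_eq_div]; gcongr)
  have hlog := log_natCast_le_three_mul_log (one_le_pow₀ hcvol.le) hratio
  rw [Real.log_pow] at hlog
  rw [div_le_iff₀ (by have := Real.log_pos hcvol; positivity)]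
  linarith

open MeasureTheory in
/-- Lower bound for noisy query games: any adaptive `T`-query strategy that identifies
the uniformly random secret `i⋆` with probability at least `2/3`, when every observation
density `f q i` is bounded by `c` on an observation space of finite volume, must satisfy
`T ≥ log n / (3·log (c·|X|))`. -/
theorem stmt_5 {Q X : Type*} [MeasurableSpace X] (μ : Measure X) [IsFiniteMeasure μ]
    (n : ℕ) (hn : 1 ≤ n) (c : ℝ) (hc : 0 < c)
    (f : Q → Fin n → X → ℝ)
    (hf0 : ∀ q i x, 0 ≤ f q i x)
    (hfmeas : ∀ q i, Measurable (f q i))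
    (hfc : ∀ q i x, f q i x ≤ c)
    (hfdens : ∀ q i, ∫ x, f q i x ∂μ = 1)
    (hcvol : 1 < c * (μ Set.univ).toReal)
    (T : ℕ)
    -- adaptive strategy: the `t`-th query depends only on the observations before time `t`
    (query : Fin T → (Fin T → X) → Q)
    (hquery : ∀ t x y, (∀ s : Fin T, s < t → x s = y s) → query t x = query t y)
    (guess : (Fin T → X) → Fin n)
    -- the success probability, written via the likelihood of the observation sequence
    (hsucc : 2/3 ≤ (1 / (n : ℝ)) * ∑ i : Fin n,
      ∫ x, (if guess x = i then (1:ℝ) else 0) * ∏ t : Fin T, f (query t x) i (x t)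
        ∂(Measure.pi fun _ : Fin T => μ)) :
    Real.log n / (3 * Real.log (c * (μ Set.univ).toReal)) ≤ (T : ℝ) :=
  stmt_5_general μ n c f hf0 hfc hcvol T query guess hsucc
end

section
/- A hyperbolic isoceles triangle with two sides of length r whose altitude onto the third side has length r − 1 has third side of length c(r) satisfying c(r) = O(1) as r → ∞; precisely, (cosh c − 1)² / sinh² c = (1 − sinh²(r−1)/sinh² r) · tanh² r, the right-hand side converges to 1 − e⁻² as r → ∞, and hence c(r) converges to a finite limit. -/
/-!
By the half-angle formulas, `(cosh c - 1)² / sinh² c = tanh² (c / 2)`, so for `c > 0` the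
defining equation says `c = 2 artanh √g(r)` with `g(r)` its right-hand side. Since
`sinh (r - 1) / sinh r → e⁻¹` and `tanh r → 1`, `g(r) → 1 - e⁻² ∈ (0, 1)`, and continuity of
`artanh` on `(-1, 1)` gives the limit of `c`.
-/
open Filter Real Topology Set

theorem tanh_eq_one_sub (x : ℝ) : tanh x = 1 - 2 / (exp (2 * x) + 1) := by
  have : exp (2 * x) = exp x ^ 2 := by rw [← exp_nat_mul]; norm_num
  rw [tanh_eq, exp_neg, this]
  field_simp
  ring

theorem tanh_nonneg {x : ℝ} (hx : 0 ≤ x) : 0 ≤ tanh x := by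
  rw [tanh_eq_sinh_div_cosh]
  exact div_nonneg (sinh_nonneg_iff.2 hx) (cosh_pos x).le

theorem tendsto_tanh_atTop : Tendsto tanh atTop (𝓝 1) := by
  have h : Tendsto (fun x : ℝ => exp (2 * x) + 1) atTop atTop :=
    tendsto_atTop_add_const_right _ _
      (tendsto_exp_atTop.comp (tendsto_id.const_mul_atTop two_pos))
  have := (tendsto_const_nhds (x := (1:ℝ))).sub ((tendsto_const_nhds (x := (2:ℝ))).div_atTop h)
  rw [sub_zero] at this
  rwa [funext tanh_eq_one_sub]

theorem sinh_sub_div_sinh {r : ℝ} (a : ℝ) (hr : sinh r ≠ 0) :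
    sinh (r - a) / sinh r = cosh a - sinh a / tanh r := by
  rw [sinh_sub, tanh_eq_sinh_div_cosh]
  field_simp

theorem tendsto_sinh_sub_div_sinh (a : ℝ) :
    Tendsto (fun r => sinh (r - a) / sinh r) atTop (𝓝 (exp (-a))) := by
  have h := (tendsto_const_nhds (x := cosh a)).sub
    ((tendsto_const_nhds (x := sinh a)).div tendsto_tanh_atTop one_ne_zero)
  rw [div_one, cosh_sub_sinh] at h
  refine h.congr' ?_
  filter_upwards [eventually_gt_atTop 0] with r hr
  exact (sinh_sub_div_sinh a (sinh_pos_iff.2 hr).ne').symm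

theorem cosh_sub_one_sq_div_sinh_sq (x : ℝ) :
    (cosh x - 1) ^ 2 / sinh x ^ 2 = tanh (x / 2) ^ 2 := by
  obtain ⟨y, rfl⟩ : ∃ y, x = 2 * y := ⟨x / 2, by ring⟩
  rw [mul_div_cancel_left₀ y two_ne_zero, cosh_two_mul, cosh_sq, sinh_two_mul,
    tanh_eq_sinh_div_cosh]
  rcases eq_or_ne (sinh y) 0 with h | h
  · simp [h]
  · have := (cosh_pos y).ne'
    field_simp
    ring

theorem continuousAt_artanh {x : ℝ} (hx : x ∈ Ioo (-1) 1) : ContinuousAt artanh x := by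
  have hq : 0 < (1 + x) / (1 - x) := div_pos (by linarith [hx.1]) (by linarith [hx.2])
  have hd : ContinuousAt (fun y : ℝ => (1 + y) / (1 - y)) x :=
    (continuousAt_const.add continuousAt_id).div (continuousAt_const.sub continuousAt_id)
      (by linarith [hx.2])
  exact (continuous_sqrt.continuousAt.comp hd).log (sqrt_pos.2 hq).ne'

theorem tendsto_one_sub_sinh_sub_sq_div_sinh_sq_mul_tanh_sq (a : ℝ) :
    Tendsto (fun r => (1 - sinh (r - a) ^ 2 / sinh r ^ 2) * tanh r ^ 2) atTop
      (𝓝 (1 - exp (-(2 * a)))) := by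
  have h := ((tendsto_const_nhds (x := (1:ℝ))).sub ((tendsto_sinh_sub_div_sinh a).pow 2)).mul
    (tendsto_tanh_atTop.pow 2)
  rw [one_pow, mul_one, ← exp_nat_mul] at h
  simpa [div_pow, mul_neg] using h

open Filter Real in
theorem stmt_6 :
    Tendsto (fun r : ℝ => (1 - sinh (r - 1) ^ 2 / sinh r ^ 2) * tanh r ^ 2)
      atTop (nhds (1 - Real.exp (-2))) ∧
    ∀ c : ℝ → ℝ,
      (∀ r : ℝ, 2 ≤ r → 0 < c r ∧
        (cosh (c r) - 1) ^ 2 / sinh (c r) ^ 2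
          = (1 - sinh (r - 1) ^ 2 / sinh r ^ 2) * tanh r ^ 2) →
      ∃ L : ℝ, Tendsto c atTop (nhds L) := by
  have hlim := tendsto_one_sub_sinh_sub_sq_div_sinh_sq_mul_tanh_sq 1
  rw [mul_one] at hlim
  refine ⟨hlim, fun c hc => ⟨2 * artanh √(1 - exp (-2)), ?_⟩⟩
  have hmem : √(1 - exp (-2)) ∈ Ioo (-1) 1 :=
    ⟨by linarith [sqrt_nonneg (1 - exp (-2))],
      (sqrt_lt' one_pos).2 (by linarith [exp_pos (-2)])⟩
  refine (((continuousAt_artanh hmem).tendsto.comp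
    (continuous_sqrt.continuousAt.tendsto.comp hlim)).const_mul 2).congr' ?_
  filter_upwards [eventually_ge_atTop 2] with r hr
  obtain ⟨hpos, hcr⟩ := hc r hr
  rw [Function.comp_apply, Function.comp_apply, ← hcr, cosh_sub_one_sq_div_sinh_sq,
    sqrt_sq (tanh_nonneg (by positivity)), artanh_tanh]
  ring
end
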